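/- arXiv:2004.05925 — 5 statements merged into one kernel-verified Lean document; each statement's English description precedes it below -/
import Mathlib

section
/- Let P ≥ 1 and let Δ be a symmetric positive definite P × P real matrix. Let w* ∈ ℝ^P be a design (w*_i ≥ 0 for all i and Σ_i w*_i = 1) with information matrix M* = diag(w*_1, …, w*_P). If tr( M* (M* + Δ⁻¹)⁻² ) ≥ e_iᵀ (M* + Δ⁻¹)⁻² e_i for all i = 1, …, P, then w* minimizes the A-criterion Φ_A(w) = tr( (M(w) + Δ⁻¹)⁻¹ ) over all designs w, where M(w) = diag(w_1, …, w_P). -/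
/-!
The A-criterion `Φ(B) = tr B⁻¹` is convex on positive definite matrices, with gradient `-A⁻²`
at `A`, so `Φ(B) ≥ Φ(A) - tr((B - A) A⁻²)`. The convexity comes from
`0 ≤ tr((X - B⁻¹) B (X - B⁻¹))` for Hermitian `X`. For `A = M(w) + Δ⁻¹` and `B = M(v) + Δ⁻¹`
the correction term is `∑ i, (v i - w i) (A⁻²)ᵢᵢ`, and the optimality condition says that the
diagonal entries of `A⁻²` are bounded by their `w`-average, hence by their `v`-average.
-/

open Matrix

namespace Matrix

variable {n : Type*} [Fintype n] [DecidableEq n]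

lemma trace_diagonal_mul {R : Type*} [NonUnitalNonAssocSemiring R] (d : n → R)
    (M : Matrix n n R) : (diagonal d * M).trace = ∑ i, d i * M i i := by
  simp only [trace, diag, diagonal_mul]

lemma PosDef.two_mul_trace_le_trace_mul_mul_add_trace_inv {B X : Matrix n n ℝ} (hB : B.PosDef)
    (hX : X.IsHermitian) : 2 * X.trace ≤ (X * B * X).trace + B⁻¹.trace := by
  have hBu : IsUnit B.det := hB.isUnit.map detMonoidHom
  have hsq : (X - B⁻¹) * B * (X - B⁻¹) = X * B * X - X - X + B⁻¹ := by
    rw [sub_mul, sub_mul, mul_sub, mul_sub, nonsing_inv_mul B hBu, Matrix.mul_assoc X B B⁻¹,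
      mul_nonsing_inv B hBu]
    simp only [Matrix.mul_one, Matrix.one_mul]
    abel
  have hpsd : ((X - B⁻¹) * B * (X - B⁻¹)).PosSemidef := by
    have := hB.posSemidef.conjTranspose_mul_mul_same (X - B⁻¹)
    rwa [(hX.sub hB.isHermitian.inv).eq] at this
  have := hpsd.trace_nonneg
  rw [hsq, trace_add, trace_sub, trace_sub] at this
  linarith

lemma trace_inv_le_trace_inv_add_trace_sub_mul {A B : Matrix n n ℝ} (hA : A.IsHermitian)
    (hAu : IsUnit A.det) (hB : B.PosDef) :
    A⁻¹.trace ≤ B⁻¹.trace + ((B - A) * (A⁻¹ * A⁻¹)).trace := by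
  have htangent := hB.two_mul_trace_le_trace_mul_mul_add_trace_inv hA.inv
  have hAA : A * (A⁻¹ * A⁻¹) = A⁻¹ := by
    rw [← Matrix.mul_assoc, mul_nonsing_inv A hAu, Matrix.one_mul]
  have hcycle : (A⁻¹ * B * A⁻¹).trace = (B * (A⁻¹ * A⁻¹)).trace := by
    rw [← Matrix.mul_assoc]; exact (trace_mul_cycle B A⁻¹ A⁻¹).symm
  rw [sub_mul, trace_sub, hAA]
  linarith

end Matrix

theorem stmt_2_general (P : ℕ)
    (Δ : Matrix (Fin P) (Fin P) ℝ) (hΔ : Δ.PosDef)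
    (w : Fin P → ℝ) (hw : ∀ i, 0 ≤ w i)
    (hopt : ∀ i : Fin P,
      (Matrix.diagonal w * (Matrix.diagonal w + Δ⁻¹)⁻¹ * (Matrix.diagonal w + Δ⁻¹)⁻¹).trace ≥
        ((Matrix.diagonal w + Δ⁻¹)⁻¹ * (Matrix.diagonal w + Δ⁻¹)⁻¹) i i) :
    ∀ v : Fin P → ℝ, (∀ i, 0 ≤ v i) → ∑ i, v i = 1 →
      ((Matrix.diagonal w + Δ⁻¹)⁻¹).trace ≤ ((Matrix.diagonal v + Δ⁻¹)⁻¹).trace := by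
  intro v hv hv1
  set A := diagonal w + Δ⁻¹
  set C := A⁻¹ * A⁻¹
  have hA : A.PosDef := hΔ.inv.posSemidef_add (posSemidef_diagonal_iff.mpr hw)
  have hB : (diagonal v + Δ⁻¹).PosDef := hΔ.inv.posSemidef_add (posSemidef_diagonal_iff.mpr hv)
  have hconvex := trace_inv_le_trace_inv_add_trace_sub_mul hA.isHermitian
    (hA.isUnit.map detMonoidHom) hB
  have hdescent : ((diagonal v + Δ⁻¹ - A) * C).trace ≤ 0 := calc
    ((diagonal v + Δ⁻¹ - A) * C).trace = ∑ i, v i * C i i - (diagonal w * C).trace := by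
      rw [add_sub_add_right_eq_sub, sub_mul, trace_sub, trace_diagonal_mul]
    _ ≤ ∑ i, v i * (diagonal w * C).trace - (diagonal w * C).trace := by
      gcongr with i
      · exact hv i
      · simpa only [C, Matrix.mul_assoc] using hopt i
    _ = 0 := by rw [← Finset.sum_mul, hv1, one_mul, sub_self]
  linarith

/-- Sufficiency part of the equivalence theorem for the A-criterion
    `Φ_A(w) = tr((M(w) + Δ⁻¹)⁻¹)`: if the design `w` satisfies the optimality condition
    `tr(M(w)(M(w)+Δ⁻¹)⁻²) ≥ eᵢᵀ (M(w)+Δ⁻¹)⁻² eᵢ` for all `i`, then `w` is A-optimal. -/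
theorem stmt_2 (P : ℕ) (hP : 1 ≤ P)
    (Δ : Matrix (Fin P) (Fin P) ℝ) (hΔ : Δ.PosDef)
    (w : Fin P → ℝ) (hw : ∀ i, 0 ≤ w i) (hw1 : ∑ i, w i = 1)
    (hopt : ∀ i : Fin P,
      (Matrix.diagonal w * (Matrix.diagonal w + Δ⁻¹)⁻¹ * (Matrix.diagonal w + Δ⁻¹)⁻¹).trace ≥
        ((Matrix.diagonal w + Δ⁻¹)⁻¹ * (Matrix.diagonal w + Δ⁻¹)⁻¹) i i) :
    ∀ v : Fin P → ℝ, (∀ i, 0 ≤ v i) → ∑ i, v i = 1 →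
      ((Matrix.diagonal w + Δ⁻¹)⁻¹).trace ≤ ((Matrix.diagonal v + Δ⁻¹)⁻¹).trace :=
  stmt_2_general P Δ hΔ w hw hopt
end

section
/- Let P ≥ 1 and let Δ be a symmetric positive definite P × P real matrix. Let w* be a design (w*_i ≥ 0, Σ_i w*_i = 1) that minimizes Φ_A(w) = tr( (M(w) + Δ⁻¹)⁻¹ ) over all designs, where M(w) = diag(w_1, …, w_P). If i and i' are two indices with w*_i > 0 and w*_{i'} > 0, then e_iᵀ (M(w*) + Δ⁻¹)⁻² e_i = e_{i'}ᵀ (M(w*) + Δ⁻¹)⁻² e_{i'}. -/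
open Matrix

/-!
Moving mass `t` from the support point `i` to the support point `i'` keeps `w` a design for
`t ∈ [-w i', w i]`, an interval with `0` in its interior. Hence, with `A = M(w) + Δ⁻¹`,
`t ↦ tr (A + t • diag(e_{i'} - e_i))⁻¹` has a local minimum at `0`, where its derivative is
`-tr (A⁻² diag(e_{i'} - e_i)) = (A⁻²)_{ii} - (A⁻²)_{i'i'}`; this must vanish.
-/

section Derivative

-- Any submultiplicative complete norm would do: it is only used to differentiate `Ring.inverse`.
attribute [local instance] Matrix.linftyOpNormedRing Matrix.linftyOpNormedAlgebra

variable {n 𝕜 : Type*} [Fintype n] [DecidableEq n] [RCLike 𝕜]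

theorem Matrix.hasDerivAt_inv_add_smul {A : Matrix n n 𝕜} (hA : IsUnit A) (C : Matrix n n 𝕜) :
    HasDerivAt (fun t : 𝕜 => (A + t • C)⁻¹) (-(A⁻¹ * C * A⁻¹)) 0 := by
  have hline := ((hasDerivAt_id (0 : 𝕜)).smul_const C).const_add A
  rw [one_smul] at hline
  have hinv := (hasFDerivAt_ringInverse (𝕜 := 𝕜) hA.unit).comp_hasDerivAt_of_eq 0 hline (by simp)
  simp only [Function.comp_def, coe_units_inv, hA.unit_spec, ← nonsing_inv_eq_ringInverse] at hinv
  exact hinv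

theorem Matrix.hasDerivAt_trace_inv_add_smul {A : Matrix n n 𝕜} (hA : IsUnit A) (C : Matrix n n 𝕜) :
    HasDerivAt (fun t : 𝕜 => (A + t • C)⁻¹.trace) (-(A⁻¹ * A⁻¹ * C).trace) 0 := by
  rw [← trace_mul_cycle, ← trace_neg]
  exact (traceLinearMap n 𝕜 𝕜).toContinuousLinearMap.hasFDerivAt.comp_hasDerivAt 0
    (hasDerivAt_inv_add_smul hA C)

end Derivative

theorem Matrix.trace_mul_diagonal_single_sub_single {n R : Type*} [Fintype n] [DecidableEq n]
    [Ring R] (B : Matrix n n R) (i j : n) :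
    (B * diagonal (Pi.single j 1 - Pi.single i 1)).trace = B j j - B i i := by
  simp [trace, mul_diagonal, Pi.single_apply, mul_sub, Finset.sum_sub_distrib]

section Transfer

variable {ι R : Type*} [DecidableEq ι]

theorem sum_add_smul_single_sub_single [Fintype ι] [Ring R] (w : ι → R) (t : R) (i j : ι) :
    ∑ k, (w + t • (Pi.single j 1 - Pi.single i 1) : ι → R) k = ∑ k, w k := by
  simp [Finset.sum_add_distrib, mul_sub, Finset.sum_sub_distrib, Pi.single_apply]

theorem add_smul_single_sub_single_nonneg [CommRing R] [LinearOrder R] [IsStrictOrderedRing R]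
    {w : ι → R} (hw : ∀ k, 0 ≤ w k) {t : R} {i j : ι} (ht : t ∈ Set.Icc (-w j) (w i)) (k : ι) :
    0 ≤ (w + t • (Pi.single j 1 - Pi.single i 1) : ι → R) k := by
  obtain ⟨htj, hti⟩ := ht
  simp only [Pi.add_apply, Pi.smul_apply, Pi.sub_apply, Pi.single_apply, smul_eq_mul]
  split_ifs <;> subst_vars <;>
    simp only [sub_self, sub_zero, zero_sub, mul_zero, mul_one, mul_neg, add_zero] <;>
    linarith [hw k]

theorem isLocalMin_comp_add_smul_single_sub_single [Fintype ι] [CommRing R] [LinearOrder R]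
    [IsStrictOrderedRing R] [TopologicalSpace R] [OrderTopology R] {F : (ι → R) → R} {w : ι → R}
    (hw : ∀ k, 0 ≤ w k)
    (hmin : ∀ v : ι → R, (∀ k, 0 ≤ v k) → ∑ k, v k = ∑ k, w k → F w ≤ F v)
    {i j : ι} (hi : 0 < w i) (hj : 0 < w j) :
    IsLocalMin (fun t : R => F (w + t • (Pi.single j 1 - Pi.single i 1))) 0 := by
  filter_upwards [Icc_mem_nhds (neg_lt_zero.2 hj) hi] with t ht
  simpa using hmin _ (add_smul_single_sub_single_nonneg hw ht)
    (sum_add_smul_single_sub_single w t i j)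

end Transfer

theorem stmt_4_general (P : ℕ)
    (Δ : Matrix (Fin P) (Fin P) ℝ) (hΔ : Δ.PosDef)
    (w : Fin P → ℝ) (hw : ∀ i, 0 ≤ w i) (hw1 : ∑ i, w i = 1)
    (hmin : ∀ v : Fin P → ℝ, (∀ i, 0 ≤ v i) → ∑ i, v i = 1 →
      ((Matrix.diagonal w + Δ⁻¹)⁻¹).trace ≤ ((Matrix.diagonal v + Δ⁻¹)⁻¹).trace)
    (i i' : Fin P) (hi : 0 < w i) (hi' : 0 < w i') :
    ((Matrix.diagonal w + Δ⁻¹)⁻¹ * (Matrix.diagonal w + Δ⁻¹)⁻¹) i i =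
      ((Matrix.diagonal w + Δ⁻¹)⁻¹ * (Matrix.diagonal w + Δ⁻¹)⁻¹) i' i' := by
  have hA : IsUnit (diagonal w + Δ⁻¹) :=
    (PosDef.posSemidef_add (PosSemidef.diagonal (d := w) hw) hΔ.inv).isUnit
  have hline (t : ℝ) (d : Fin P → ℝ) :
      diagonal (w + t • d) + Δ⁻¹ = diagonal w + Δ⁻¹ + t • diagonal d := by
    rw [add_right_comm, ← diagonal_smul, diagonal_add]
    rfl
  have hlocal : IsLocalMin (fun t : ℝ =>
      ((diagonal w + Δ⁻¹ + t • diagonal (Pi.single i' 1 - Pi.single i 1))⁻¹).trace) 0 := by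
    simpa only [hline] using
      isLocalMin_comp_add_smul_single_sub_single (F := fun v => ((diagonal v + Δ⁻¹)⁻¹).trace) hw
        (fun v hv hsum => hmin v hv (hsum.trans hw1)) hi hi'
  have hcritical := hlocal.hasDerivAt_eq_zero (hasDerivAt_trace_inv_add_smul hA _)
  rw [trace_mul_diagonal_single_sub_single] at hcritical
  linarith

/-- for an A-optimal design `w`, all support points `i, i'` (those with
    `wᵢ > 0`, `w_{i'} > 0`) give the same value
    `eᵢᵀ (M(w)+Δ⁻¹)⁻² eᵢ = e_{i'}ᵀ (M(w)+Δ⁻¹)⁻² e_{i'}`. -/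
theorem stmt_4 (P : ℕ) (hP : 1 ≤ P)
    (Δ : Matrix (Fin P) (Fin P) ℝ) (hΔ : Δ.PosDef)
    (w : Fin P → ℝ) (hw : ∀ i, 0 ≤ w i) (hw1 : ∑ i, w i = 1)
    (hmin : ∀ v : Fin P → ℝ, (∀ i, 0 ≤ v i) → ∑ i, v i = 1 →
      ((Matrix.diagonal w + Δ⁻¹)⁻¹).trace ≤ ((Matrix.diagonal v + Δ⁻¹)⁻¹).trace)
    (i i' : Fin P) (hi : 0 < w i) (hi' : 0 < w i') :
    ((Matrix.diagonal w + Δ⁻¹)⁻¹ * (Matrix.diagonal w + Δ⁻¹)⁻¹) i i =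
      ((Matrix.diagonal w + Δ⁻¹)⁻¹ * (Matrix.diagonal w + Δ⁻¹)⁻¹) i' i' :=
  stmt_4_general P Δ hΔ w hw hw1 hmin i i' hi hi'
end

section
/- Let P ≥ 1, let a, b be real numbers with b > 0 and b + Pa > 0, and set D = a 1_P 1_Pᵀ + b I_P (which is then symmetric positive definite). Let c > 0 and Δ = c D. Then the balanced design w* with w*_i = 1/P for all i = 1, …, P minimizes the A-criterion Φ_A(w) = tr( (M(w) + Δ⁻¹)⁻¹ ) over all designs w (w_i ≥ 0, Σ_i w_i = 1), where M(w) = diag(w_1, …, w_P). -/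
/-! Write `A = M(v) + Δ⁻¹`, `A⋆ = M(w⋆) + Δ⁻¹` and `Z = A⋆⁻¹`. Since `(A⁻¹ - Z) A (A⁻¹ - Z)`
is positive semidefinite, `tr A⁻¹ ≥ 2 tr Z - tr (Z A Z)`: the tangent-plane inequality of the
convex map `A ↦ tr A⁻¹` at `A⋆`. Both `Δ` and `M(w⋆)` are invariant under simultaneous
permutations of rows and columns, hence so are `Z` and `Z²`; thus `Z²` has constant diagonal and
`tr (Z M(v) Z) = tr (Z² M(v))` depends only on `∑ vᵢ = 1`. So `tr (Z A Z) = tr (Z A⋆ Z) = tr Z`.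
-/

open Matrix

namespace Matrix

section PosDef

variable {n : Type*} [Fintype n] [DecidableEq n]

open scoped ComplexOrder in
theorem trace_two_smul_sub_mul_mul_le_trace_inv {𝕜 : Type*} [RCLike 𝕜] {A Z : Matrix n n 𝕜}
    (hA : A.PosDef) (hZ : Z.IsHermitian) : (2 • Z - Z * A * Z).trace ≤ A⁻¹.trace := by
  have hdet : IsUnit A.det := (isUnit_iff_isUnit_det A).mp hA.isUnit
  have hsq : A⁻¹ - (2 • Z - Z * A * Z) = (A⁻¹ - Z)ᴴ * A * (A⁻¹ - Z) := by
    rw [conjTranspose_sub, hA.isHermitian.inv, hZ.eq, sub_mul A⁻¹ Z A, nonsing_inv_mul _ hdet,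
      sub_mul, one_mul, mul_sub, Matrix.mul_assoc Z A A⁻¹, mul_nonsing_inv _ hdet, mul_one,
      two_smul]
    abel
  have := (hA.posSemidef.conjTranspose_mul_mul_same (A⁻¹ - Z)).trace_nonneg
  rwa [← hsq, trace_sub, sub_nonneg] at this

theorem dotProduct_mulVec_smul_allOnes_add_smul_one (a b : ℝ) (x : n → ℝ) :
    star x ⬝ᵥ ((a • of (fun _ _ : n => (1 : ℝ)) + b • 1) *ᵥ x) =
      a * (∑ i, x i) ^ 2 + b * ∑ i, x i ^ 2 := by
  have hmulVec :
      (a • of (fun _ _ : n => (1 : ℝ)) + b • 1) *ᵥ x = fun i => a * ∑ j, x j + b * x i := by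
    ext i
    simp [mulVec, dotProduct, add_mul, Finset.sum_add_distrib, one_apply, ← Finset.mul_sum]
  simp only [hmulVec, star_trivial, dotProduct, mul_add, Finset.sum_add_distrib,
    mul_left_comm _ a, mul_left_comm _ b, ← Finset.mul_sum, ← Finset.sum_mul, sq]

theorem posDef_smul_allOnes_add_smul_one {a b : ℝ} (hb : 0 < b)
    (hba : 0 < b + Fintype.card n * a) :
    (a • of (fun _ _ : n => (1 : ℝ)) + b • 1).PosDef := by
  refine .of_dotProduct_mulVec_pos ?_ fun x hx => ?_
  · ext i j
    simp [one_apply, eq_comm]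
  rw [dotProduct_mulVec_smul_allOnes_add_smul_one]
  have hx2 : 0 < ∑ i, x i ^ 2 := by
    obtain ⟨i, hi⟩ := Function.ne_iff.mp hx
    exact Finset.sum_pos' (fun j _ => sq_nonneg (x j))
      ⟨i, Finset.mem_univ i, sq_pos_of_ne_zero hi⟩
  have hcs : (∑ i, x i) ^ 2 ≤ Fintype.card n * ∑ i, x i ^ 2 := sq_sum_le_card_mul_sum_sq
  rcases le_or_gt 0 a with ha | ha
  · nlinarith [sq_nonneg (∑ i, x i)]
  · nlinarith

end PosDef

variable {n R : Type*}

def IsPermInvariant (M : Matrix n n R) : Prop :=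
  ∀ σ : Equiv.Perm n, M.submatrix σ σ = M

theorem isPermInvariant_const (x : R) : IsPermInvariant (of fun _ _ : n => x) := fun _ => rfl

theorem isPermInvariant_one [DecidableEq n] [Zero R] [One R] :
    IsPermInvariant (1 : Matrix n n R) :=
  fun σ => submatrix_one_equiv σ

theorem isPermInvariant_diagonal_const [DecidableEq n] [Zero R] (x : R) :
    IsPermInvariant (diagonal fun _ : n => x) :=
  fun σ => submatrix_diagonal_equiv _ σ

namespace IsPermInvariant

theorem add [Add R] {M N : Matrix n n R} (hM : IsPermInvariant M) (hN : IsPermInvariant N) :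
    IsPermInvariant (M + N) := fun σ => by
  rw [submatrix_add, Pi.add_apply, Pi.add_apply, hM σ, hN σ]

theorem smul {S : Type*} [SMul S R] {M : Matrix n n R} (hM : IsPermInvariant M) (c : S) :
    IsPermInvariant (c • M) := fun σ => by
  rw [submatrix_smul, Pi.smul_apply, Pi.smul_apply, hM σ]

theorem mul [Fintype n] [NonUnitalNonAssocSemiring R] {M N : Matrix n n R}
    (hM : IsPermInvariant M) (hN : IsPermInvariant N) : IsPermInvariant (M * N) := fun σ => by
  rw [← submatrix_mul_equiv M N σ σ σ, hM σ, hN σ]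

theorem inv [Fintype n] [DecidableEq n] [CommRing R] {M : Matrix n n R} (hM : IsPermInvariant M) :
    IsPermInvariant M⁻¹ := fun σ => by
  rw [← inv_submatrix_equiv, hM σ]

theorem apply_self_eq [DecidableEq n] {M : Matrix n n R} (hM : IsPermInvariant M) (i j : n) :
    M i i = M j j := by
  simpa using (congrFun (congrFun (hM (Equiv.swap i j)) i) i).symm

theorem trace_mul_diagonal_mul_congr [Fintype n] [DecidableEq n] [CommSemiring R]
    {Z : Matrix n n R} (hZ : IsPermInvariant Z) {v w : n → R} (h : ∑ i, v i = ∑ i, w i) :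
    (Z * diagonal v * Z).trace = (Z * diagonal w * Z).trace := by
  rcases isEmpty_or_nonempty n with hn | ⟨⟨i₀⟩⟩
  · simp [trace]
  have hZZ := (hZ.mul hZ).apply_self_eq
  rw [trace_mul_cycle Z (diagonal v), trace_mul_cycle Z (diagonal w)]
  simp only [trace, diag, mul_diagonal, hZZ _ i₀, ← Finset.mul_sum, h]

end IsPermInvariant

end Matrix

theorem stmt_5_general (P : ℕ) (a b c : ℝ)
    (hb : 0 < b) (hba : 0 < b + (P : ℝ) * a) (hc : 0 < c)
    (D Δ : Matrix (Fin P) (Fin P) ℝ)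
    (hD : D = a • (Matrix.of fun _ _ => (1 : ℝ)) + b • (1 : Matrix (Fin P) (Fin P) ℝ))
    (hΔ : Δ = c • D) :
    ∀ v : Fin P → ℝ, (∀ i, 0 ≤ v i) → ∑ i, v i = 1 →
      ((Matrix.diagonal (fun _ : Fin P => (P : ℝ)⁻¹) + Δ⁻¹)⁻¹).trace ≤
        ((Matrix.diagonal v + Δ⁻¹)⁻¹).trace := by
  intro v hv0 hv1
  have hΔinv : Δ⁻¹.PosDef := by
    rw [hΔ, hD]
    exact ((posDef_smul_allOnes_add_smul_one hb (by simpa using hba)).smul hc).inv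
  have hΔinv_perm : IsPermInvariant Δ⁻¹ := by
    rw [hΔ, hD]
    exact (((isPermInvariant_const 1).smul a).add (isPermInvariant_one.smul b)).smul c |>.inv
  set Astar := Matrix.diagonal (fun _ : Fin P => (P : ℝ)⁻¹) + Δ⁻¹
  set A := Matrix.diagonal v + Δ⁻¹
  set Z := Astar⁻¹
  have hAstar : Astar.PosDef := hΔinv.posSemidef_add (.diagonal fun _ => by positivity)
  have hA : A.PosDef := hΔinv.posSemidef_add (.diagonal hv0)
  have hZ : IsPermInvariant Z := ((isPermInvariant_diagonal_const _).add hΔinv_perm).inv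
  have hP : P ≠ 0 := by
    rintro rfl
    simp at hv1
  have hZAZ : (Z * A * Z).trace = Z.trace := by
    have hsum : ∑ i, v i = ∑ _i : Fin P, (P : ℝ)⁻¹ := by simp [hv1, hP]
    have hAstarZ : Astar * Z = 1 :=
      mul_nonsing_inv _ ((isUnit_iff_isUnit_det Astar).mp hAstar.isUnit)
    rw [mul_add, add_mul, trace_add, hZ.trace_mul_diagonal_mul_congr hsum, ← trace_add,
      ← add_mul, ← mul_add, Matrix.mul_assoc, hAstarZ, mul_one]
  calc Z.trace = (2 • Z - Z * A * Z).trace := by rw [trace_sub, hZAZ, trace_smul]; ring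
    _ ≤ A⁻¹.trace := trace_two_smul_sub_mul_mul_le_trace_inv hA hAstar.inv.isHermitian

/-- in the compound symmetry model `D = a 1ₚ1ₚᵀ + b Iₚ` (with `b > 0`,
    `b + Pa > 0`) and `Δ = c D` with `c > 0`, the balanced design `wᵢ = 1/P` minimizes
    the A-criterion `Φ_A(v) = tr((M(v) + Δ⁻¹)⁻¹)` over all designs. -/
theorem stmt_5 (P : ℕ) (hP : 1 ≤ P) (a b c : ℝ)
    (hb : 0 < b) (hba : 0 < b + (P : ℝ) * a) (hc : 0 < c)
    (D Δ : Matrix (Fin P) (Fin P) ℝ)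
    (hD : D = a • (Matrix.of fun _ _ => (1 : ℝ)) + b • (1 : Matrix (Fin P) (Fin P) ℝ))
    (hΔ : Δ = c • D) :
    ∀ v : Fin P → ℝ, (∀ i, 0 ≤ v i) → ∑ i, v i = 1 →
      ((Matrix.diagonal (fun _ : Fin P => (P : ℝ)⁻¹) + Δ⁻¹)⁻¹).trace ≤
        ((Matrix.diagonal v + Δ⁻¹)⁻¹).trace :=
  stmt_5_general P a b c hb hba hc D Δ hD hΔ
end

section
/- Let P ≥ 1 and let Δ be a diagonal P × P real matrix with strictly positive diagonal entries. Let w̃ be a design (w̃_i ≥ 0, Σ_i w̃_i = 1) with M̃ = diag(w̃_1, …, w̃_P), and suppose w̃ satisfies the equal-efficiency condition e_iᵀ (M̃ + Δ⁻¹)⁻¹ e_i = e_{i'}ᵀ (M̃ + Δ⁻¹)⁻¹ e_{i'} for all i, i' = 1, …, P. Then w̃ minimizes the A-criterion Φ_A(w) = tr( (M(w) + Δ⁻¹)⁻¹ ) over all designs w, where M(w) = diag(w_1, …, w_P). -/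
open Matrix

/-
The matrices involved are all diagonal, so `(M(v) + Δ⁻¹)⁻¹ = diag (1 / (v i + 1 / d i))` and the
A-criterion is `Φ_A(v) = ∑ i, 1 / (v i + 1 / d i)`. The denominators always sum to
`1 + ∑ i, 1 / d i`, whatever the design. The equal-efficiency condition says that for `w̃` they are
all equal, and by the Cauchy–Schwarz (AM–HM) inequality equal positive numbers minimize the sum of
reciprocals among positive numbers with a prescribed sum.
-/

theorem Matrix.inv_diagonal_of_ne_zero {n K : Type*} [Fintype n] [DecidableEq n] [Field K]
    {v : n → K} (hv : ∀ i, v i ≠ 0) : (diagonal v)⁻¹ = diagonal fun i => (v i)⁻¹ :=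
  inv_eq_right_inv <| by
    rw [diagonal_mul_diagonal, ← diagonal_one]
    exact congrArg diagonal (funext fun i => mul_inv_cancel₀ (hv i))

theorem Matrix.inv_diagonal_add_inv_diagonal {n : Type*} [Fintype n] [DecidableEq n]
    {u d : n → ℝ} (hu : ∀ i, 0 ≤ u i) (hd : ∀ i, 0 < d i) :
    (diagonal u + (diagonal d)⁻¹)⁻¹ = diagonal fun i => (u i + (d i)⁻¹)⁻¹ := by
  rw [inv_diagonal_of_ne_zero fun i => (hd i).ne', diagonal_add,
    inv_diagonal_of_ne_zero fun i => (add_pos_of_nonneg_of_pos (hu i) (inv_pos.2 (hd i))).ne']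

theorem Finset.sum_inv_le_sum_inv_of_sum_eq_of_const {ι : Type*} [Fintype ι] {x y : ι → ℝ}
    (hx : ∀ i j, x i = x j) (hy₀ : ∀ i, 0 < y i)
    (hxy : ∑ i, x i = ∑ i, y i) : ∑ i, (x i)⁻¹ ≤ ∑ i, (y i)⁻¹ := by
  cases isEmpty_or_nonempty ι
  · simp
  obtain ⟨j⟩ := ‹Nonempty ι›
  have hxj : x = fun _ => x j := funext fun i => hx i j
  have hCS := sq_sum_div_le_sum_sq_div univ (fun _ => (1 : ℝ)) fun i _ => hy₀ i
  rw [← hxy, hxj] at hCS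
  simp only [sum_const, card_univ, nsmul_eq_mul, mul_one, one_pow, one_div] at hCS
  rw [hxj]
  calc ∑ _ : ι, (x j)⁻¹ = (Fintype.card ι : ℝ) ^ 2 / (Fintype.card ι * x j) := by
        rw [sum_const, card_univ, nsmul_eq_mul]
        field_simp
    _ ≤ ∑ i, (y i)⁻¹ := hCS

theorem stmt_11_general (P : ℕ)
    (d : Fin P → ℝ) (hd : ∀ i, 0 < d i)
    (Δ : Matrix (Fin P) (Fin P) ℝ) (hΔ : Δ = Matrix.diagonal d)
    (w : Fin P → ℝ) (hw : ∀ i, 0 ≤ w i) (hw1 : ∑ i, w i = 1)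
    (heq : ∀ i i' : Fin P,
      ((Matrix.diagonal w + Δ⁻¹)⁻¹) i i = ((Matrix.diagonal w + Δ⁻¹)⁻¹) i' i') :
    ∀ v : Fin P → ℝ, (∀ i, 0 ≤ v i) → ∑ i, v i = 1 →
      ((Matrix.diagonal w + Δ⁻¹)⁻¹).trace ≤ ((Matrix.diagonal v + Δ⁻¹)⁻¹).trace := by
  intro v hv hv1
  subst hΔ
  rw [inv_diagonal_add_inv_diagonal hw hd] at heq
  rw [inv_diagonal_add_inv_diagonal hw hd, inv_diagonal_add_inv_diagonal hv hd,
    trace_diagonal, trace_diagonal]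
  refine Finset.sum_inv_le_sum_inv_of_sum_eq_of_const (fun i j => ?_)
    (fun i => add_pos_of_nonneg_of_pos (hv i) (inv_pos.2 (hd i))) ?_
  · simpa using heq i j
  · rw [Finset.sum_add_distrib, Finset.sum_add_distrib, hw1, hv1]

/-- if `Δ` is diagonal with strictly positive diagonal entries and the design
    `w̃` satisfies the equal-efficiency condition (all diagonal entries of `(M(w̃)+Δ⁻¹)⁻¹`
    are equal), then `w̃` minimizes the A-criterion `Φ_A(v) = tr((M(v)+Δ⁻¹)⁻¹)` over all
    designs. -/
theorem stmt_11 (P : ℕ) (hP : 1 ≤ P)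
    (d : Fin P → ℝ) (hd : ∀ i, 0 < d i)
    (Δ : Matrix (Fin P) (Fin P) ℝ) (hΔ : Δ = Matrix.diagonal d)
    (w : Fin P → ℝ) (hw : ∀ i, 0 ≤ w i) (hw1 : ∑ i, w i = 1)
    (heq : ∀ i i' : Fin P,
      ((Matrix.diagonal w + Δ⁻¹)⁻¹) i i = ((Matrix.diagonal w + Δ⁻¹)⁻¹) i' i') :
    ∀ v : Fin P → ℝ, (∀ i, 0 ≤ v i) → ∑ i, v i = 1 →
      ((Matrix.diagonal w + Δ⁻¹)⁻¹).trace ≤ ((Matrix.diagonal v + Δ⁻¹)⁻¹).trace :=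
  stmt_11_general P d hd Δ hΔ w hw hw1 heq
end

section
/- Let K ≥ 2, P ≥ 1, J ≥ 1, σ² > 0, v_2 ≥ 0, and let D be a symmetric positive definite P × P real matrix. For a design w (w_i ≥ 0, Σ_i w_i = 1) with M(w) = diag(w_1, …, w_P), define MSE_α(w) = σ² [ (1/K) 1_K 1_Kᵀ ⊗ D + (I_K − (1/K) 1_K 1_Kᵀ) ⊗ ( (2J/(2v_2+1)) M(w) + D⁻¹ )⁻¹ ] and MSE_θ(w) = 2σ² ( (2J/(2v_2+1)) M(w) + D⁻¹ )⁻¹. Then tr(MSE_α(w)) = σ² tr(D) + (K−1) σ² tr( ( (2J/(2v_2+1)) M(w) + D⁻¹ )⁻¹ ) and tr(MSE_θ(w)) = 2σ² tr( ( (2J/(2v_2+1)) M(w) + D⁻¹ )⁻¹ ). Consequently, a design w* minimizes tr(MSE_α(w)) over all designs if and only if it minimizes tr(MSE_θ(w)) over all designs. -/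
/-!
Since `tr(A ⊗ B) = tr A · tr B` and the averaging matrix `(1/K) 1_K 1_Kᵀ` has trace `1`,
`tr MSE_α(w)` and `tr MSE_θ(w)` are both increasing affine functions of `tr W(w)`, with positive
slopes `(K−1)σ²` and `2σ²`. Hence each is minimised exactly where `tr W(w)` is.
-/

open Matrix
open scoped Kronecker

namespace Matrix

variable {m n R : Type*} [Fintype m] [Fintype n]

theorem trace_inv_card_smul_of_one [Field R] (hm : (Fintype.card m : R) ≠ 0) :
    ((Fintype.card m : R)⁻¹ • (of fun _ _ => (1 : R)) : Matrix m m R).trace = 1 := by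
  simp [trace, hm]

theorem trace_kronecker_add_one_sub_kronecker [DecidableEq m] [CommRing R]
    (A : Matrix m m R) (hA : A.trace = 1) (B C : Matrix n n R) :
    (A ⊗ₖ B + (1 - A) ⊗ₖ C).trace = B.trace + (Fintype.card m - 1) * C.trace := by
  rw [trace_add, trace_kronecker, trace_kronecker, trace_sub, trace_one, hA, one_mul]

end Matrix

theorem stmt_13_general (K P : ℕ) (hK : 2 ≤ K)
    (σ2 : ℝ) (hσ2 : 0 < σ2)
    (D : Matrix (Fin P) (Fin P) ℝ)
    (W : (Fin P → ℝ) → Matrix (Fin P) (Fin P) ℝ)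
    (MSEα : (Fin P → ℝ) → Matrix (Fin K × Fin P) (Fin K × Fin P) ℝ)
    (hMSEα : ∀ w, MSEα w = σ2 •
      ((((K : ℝ)⁻¹ • (Matrix.of fun _ _ => (1 : ℝ)) : Matrix (Fin K) (Fin K) ℝ) ⊗ₖ D) +
        (((1 : Matrix (Fin K) (Fin K) ℝ) -
            (K : ℝ)⁻¹ • (Matrix.of fun _ _ => (1 : ℝ))) ⊗ₖ W w)))
    (MSEθ : (Fin P → ℝ) → Matrix (Fin P) (Fin P) ℝ)
    (hMSEθ : ∀ w, MSEθ w = (2 * σ2) • W w) :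
    (∀ w : Fin P → ℝ, (∀ i, 0 ≤ w i) → ∑ i, w i = 1 →
      (MSEα w).trace = σ2 * D.trace + ((K : ℝ) - 1) * σ2 * (W w).trace ∧
      (MSEθ w).trace = 2 * σ2 * (W w).trace) ∧
    (∀ w : Fin P → ℝ, (∀ i, 0 ≤ w i) → ∑ i, w i = 1 →
      ((∀ v : Fin P → ℝ, (∀ i, 0 ≤ v i) → ∑ i, v i = 1 →
          (MSEα w).trace ≤ (MSEα v).trace) ↔
        (∀ v : Fin P → ℝ, (∀ i, 0 ≤ v i) → ∑ i, v i = 1 →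
          (MSEθ w).trace ≤ (MSEθ v).trace))) := by
  have hK_gt_one : (1 : ℝ) < K := by exact_mod_cast hK
  have h_avg :
      ((K : ℝ)⁻¹ • (Matrix.of fun _ _ => (1 : ℝ)) : Matrix (Fin K) (Fin K) ℝ).trace = 1 := by
    simpa using trace_inv_card_smul_of_one (m := Fin K) (R := ℝ) (by simp; omega)
  have h_trα : ∀ w, (MSEα w).trace = σ2 * D.trace + ((K : ℝ) - 1) * σ2 * (W w).trace := by
    intro w
    rw [hMSEα, trace_smul, trace_kronecker_add_one_sub_kronecker _ h_avg, Fintype.card_fin,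
      smul_eq_mul]
    ring
  have h_trθ : ∀ w, (MSEθ w).trace = 2 * σ2 * (W w).trace := fun w => by
    rw [hMSEθ, trace_smul, smul_eq_mul]
  refine ⟨fun w _ _ => ⟨h_trα w, h_trθ w⟩, fun w _ _ => ?_⟩
  have h_leα : ∀ v, (MSEα w).trace ≤ (MSEα v).trace ↔ (W w).trace ≤ (W v).trace := fun v => by
    rw [h_trα, h_trα, add_le_add_iff_left, mul_le_mul_iff_right₀ (mul_pos (by linarith) hσ2)]
  have h_leθ : ∀ v, (MSEθ w).trace ≤ (MSEθ v).trace ↔ (W w).trace ≤ (W v).trace := fun v => by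
    rw [h_trθ, h_trθ, mul_le_mul_iff_right₀ (by linarith)]
  simp only [h_leα, h_leθ]

/-- traces of the MSE matrices for the genotype effects and the pairwise
    contrasts, extended to approximate designs. With
    `W(w) = ((2J/(2v₂+1)) M(w) + D⁻¹)⁻¹`,
    `MSE_α(w) = σ²[(1/K)1_K1_Kᵀ ⊗ D + (I_K − (1/K)1_K1_Kᵀ) ⊗ W(w)]` and
    `MSE_θ(w) = 2σ² W(w)`, one has `tr MSE_α(w) = σ² tr D + (K−1)σ² tr W(w)` and
    `tr MSE_θ(w) = 2σ² tr W(w)`; consequently a design minimizes `tr MSE_α` over all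
    designs iff it minimizes `tr MSE_θ` over all designs. -/
theorem stmt_13 (K P J : ℕ) (hK : 2 ≤ K) (hP : 1 ≤ P) (hJ : 1 ≤ J)
    (σ2 v2 : ℝ) (hσ2 : 0 < σ2) (hv2 : 0 ≤ v2)
    (D : Matrix (Fin P) (Fin P) ℝ) (hD : D.PosDef)
    (W : (Fin P → ℝ) → Matrix (Fin P) (Fin P) ℝ)
    (hW : ∀ w, W w = ((2 * (J : ℝ) / (2 * v2 + 1)) • Matrix.diagonal w + D⁻¹)⁻¹)
    (MSEα : (Fin P → ℝ) → Matrix (Fin K × Fin P) (Fin K × Fin P) ℝ)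
    (hMSEα : ∀ w, MSEα w = σ2 •
      ((((K : ℝ)⁻¹ • (Matrix.of fun _ _ => (1 : ℝ)) : Matrix (Fin K) (Fin K) ℝ) ⊗ₖ D) +
        (((1 : Matrix (Fin K) (Fin K) ℝ) -
            (K : ℝ)⁻¹ • (Matrix.of fun _ _ => (1 : ℝ))) ⊗ₖ W w)))
    (MSEθ : (Fin P → ℝ) → Matrix (Fin P) (Fin P) ℝ)
    (hMSEθ : ∀ w, MSEθ w = (2 * σ2) • W w) :
    (∀ w : Fin P → ℝ, (∀ i, 0 ≤ w i) → ∑ i, w i = 1 →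
      (MSEα w).trace = σ2 * D.trace + ((K : ℝ) - 1) * σ2 * (W w).trace ∧
      (MSEθ w).trace = 2 * σ2 * (W w).trace) ∧
    (∀ w : Fin P → ℝ, (∀ i, 0 ≤ w i) → ∑ i, w i = 1 →
      ((∀ v : Fin P → ℝ, (∀ i, 0 ≤ v i) → ∑ i, v i = 1 →
          (MSEα w).trace ≤ (MSEα v).trace) ↔
        (∀ v : Fin P → ℝ, (∀ i, 0 ≤ v i) → ∑ i, v i = 1 →
          (MSEθ w).trace ≤ (MSEθ v).trace))) :=
  stmt_13_general K P hK σ2 hσ2 D W MSEα hMSEα MSEθ hMSEθ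
end
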